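/- Let G be a finite group, L and R subgroups, and D ⊆ G a union of (R,L)-double cosets. The bi-coset graph B(G, L, R, D) is connected if and only if the set D^{-1}D = {d^{-1}d' : d, d' ∈ D} generates G. -/

import Mathlib

open QuotientGroup

/-- The bi-coset graph `B(G, L, R, D)`: vertex set is the disjoint union of the sets of
right cosets `[G:L]` and `[G:R]`, with `La` adjacent to `Rb` iff `b·a⁻¹ ∈ D`. -/
def biCosetGraph (G : Type*) [Group G] (L R : Subgroup G) (D : Set G) :
    SimpleGraph (Quotient (rightRel L) ⊕ Quotient (rightRel R)) where
  Adj u v := ∃ a b : G, b * a⁻¹ ∈ D ∧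
    ((u = Sum.inl (Quotient.mk (rightRel L) a) ∧ v = Sum.inr (Quotient.mk (rightRel R) b)) ∨
     (v = Sum.inl (Quotient.mk (rightRel L) a) ∧ u = Sum.inr (Quotient.mk (rightRel R) b)))
  symm := by
    constructor
    rintro u v ⟨a, b, hab, h⟩
    exact ⟨a, b, hab, h.symm⟩
  loopless := by
    constructor
    rintro u ⟨a, b, hab, ⟨h1, h2⟩ | ⟨h1, h2⟩⟩ <;> rw [h1] at h2 <;> exact Sum.inl_ne_inr h2

/-- If `D` is a nonempty union of `(R,L)`-double cosets in the finite group `G`,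
then the bi-coset graph `B(G, L, R, D)` is connected if and only if the set
`D⁻¹D = {d⁻¹d' : d, d' ∈ D}` generates `G`. -/
theorem stmt_14 (G : Type*) [Group G] [Finite G] (L R : Subgroup G) (D : Set G)
    (hD : ∀ r ∈ (R : Set G), ∀ d ∈ D, ∀ l ∈ (L : Set G), r * d * l ∈ D)
    (hne : D.Nonempty) :
    (biCosetGraph G L R D).Connected ↔
      Subgroup.closure {x : G | ∃ d ∈ D, ∃ d' ∈ D, x = d⁻¹ * d'} = ⊤ := by
  classical
  obtain ⟨d₀, hd₀⟩ := hne
  set S : Set G := {x : G | ∃ d ∈ D, ∃ d' ∈ D, x = d⁻¹ * d'} with hSdef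
  set H := Subgroup.closure S with hHdef
  have hSmem : ∀ d ∈ D, ∀ d' ∈ D, d⁻¹ * d' ∈ H := fun d hd d' hd' =>
    Subgroup.subset_closure ⟨d, hd, d', hd', rfl⟩
  have hLH : ∀ l ∈ L, l ∈ H := by
    intro l hl
    have h1 : d₀ * l ∈ D := by simpa using hD 1 R.one_mem d₀ hd₀ l hl
    simpa [mul_assoc] using hSmem d₀ hd₀ _ h1
  have hRH : ∀ r ∈ R, d₀⁻¹ * r * d₀ ∈ H := by
    intro r hr
    have h1 : r * d₀ ∈ D := by simpa using hD r hr d₀ hd₀ 1 L.one_mem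
    simpa [mul_assoc] using hSmem d₀ hd₀ _ h1
  constructor
  · -- forward direction
    intro hconn
    set pred : (Quotient (rightRel L) ⊕ Quotient (rightRel R)) → Prop := fun u =>
      (∃ a, a ∈ H ∧ u = Sum.inl (Quotient.mk (rightRel L) a)) ∨
      (∃ b, d₀⁻¹ * b ∈ H ∧ u = Sum.inr (Quotient.mk (rightRel R) b)) with hpred
    have hstep : ∀ u v, (biCosetGraph G L R D).Adj u v → pred u → pred v := by
      rintro u v ⟨a, b, hab, ⟨hu, hv⟩ | ⟨hv, hu⟩⟩ hp
      · -- u = inl a, v = inr b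
        rcases hp with ⟨a', ha', hu'⟩ | ⟨b', hb', hu'⟩
        · rw [hu] at hu'
          have hq : Quotient.mk (rightRel L) a = Quotient.mk (rightRel L) a' :=
            Sum.inl.inj hu'
          have hrel : a' * a⁻¹ ∈ L := rightRel_apply.mp (Quotient.eq.mp hq)
          have haH : a ∈ H := by
            have := H.mul_mem (H.inv_mem (hLH _ hrel)) ha'
            simpa [mul_assoc] using this
          refine Or.inr ⟨b, ?_, hv⟩
          have := H.mul_mem (hSmem d₀ hd₀ _ hab) haH
          have heq : d₀⁻¹ * (b * a⁻¹) * a = d₀⁻¹ * b := by group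
          rwa [heq] at this
        · rw [hu] at hu'; exact absurd hu' (by simp)
      · -- u = inr b, v = inl a
        rcases hp with ⟨a', ha', hu'⟩ | ⟨b', hb', hu'⟩
        · rw [hu] at hu'; exact absurd hu' (by simp)
        · rw [hu] at hu'
          have hq : Quotient.mk (rightRel R) b = Quotient.mk (rightRel R) b' :=
            Sum.inr.inj hu'
          have hrel : b' * b⁻¹ ∈ R := rightRel_apply.mp (Quotient.eq.mp hq)
          have hbH : d₀⁻¹ * b ∈ H := by
            have := H.mul_mem (H.inv_mem (hRH _ hrel)) hb'
            have heq : (d₀⁻¹ * (b' * b⁻¹) * d₀)⁻¹ * (d₀⁻¹ * b') = d₀⁻¹ * b := by group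
            rwa [heq] at this
          refine Or.inl ⟨a, ?_, hv⟩
          have := H.mul_mem (H.inv_mem (hSmem d₀ hd₀ _ hab)) hbH
          have heq : (d₀⁻¹ * (b * a⁻¹))⁻¹ * (d₀⁻¹ * b) = a := by group
          rwa [heq] at this
    have hwalk : ∀ u v, (biCosetGraph G L R D).Reachable u v → pred u → pred v := by
      intro u v h
      obtain ⟨w⟩ := h
      induction w with
      | nil => exact id
      | cons hadj _ ih => exact fun hu => ih (hstep _ _ hadj hu)
    rw [Subgroup.eq_top_iff']
    intro g
    have hr := hconn.preconnected (Sum.inl (Quotient.mk (rightRel L) 1))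
      (Sum.inl (Quotient.mk (rightRel L) g))
    have hp1 : pred (Sum.inl (Quotient.mk (rightRel L) 1)) := Or.inl ⟨1, H.one_mem, rfl⟩
    have hpg := hwalk _ _ hr hp1
    rcases hpg with ⟨a, haH, heq⟩ | ⟨b, _, heq⟩
    · have hq : Quotient.mk (rightRel L) g = Quotient.mk (rightRel L) a := Sum.inl.inj heq
      have hrel : a * g⁻¹ ∈ L := rightRel_apply.mp (Quotient.eq.mp hq)
      have := H.mul_mem (H.inv_mem (hLH _ hrel)) haH
      have heq2 : (a * g⁻¹)⁻¹ * a = g := by group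
      rwa [heq2] at this
    · exact absurd heq (by simp)
  · -- backward direction
    intro htop
    have hstep : ∀ s ∈ S, ∀ x : G,
        (biCosetGraph G L R D).Reachable (Sum.inl (Quotient.mk (rightRel L) x))
          (Sum.inl (Quotient.mk (rightRel L) (s * x))) := by
      rintro s ⟨d, hd, d', hd', rfl⟩ x
      have e1 : (biCosetGraph G L R D).Adj (Sum.inl (Quotient.mk (rightRel L) x))
          (Sum.inr (Quotient.mk (rightRel R) (d' * x))) := by
        refine ⟨x, d' * x, ?_, Or.inl ⟨rfl, rfl⟩⟩
        simpa using hd'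
      have e2 : (biCosetGraph G L R D).Adj (Sum.inr (Quotient.mk (rightRel R) (d' * x)))
          (Sum.inl (Quotient.mk (rightRel L) (d⁻¹ * d' * x))) := by
        refine ⟨d⁻¹ * d' * x, d' * x, ?_, Or.inr ⟨rfl, rfl⟩⟩
        have heq : d' * x * (d⁻¹ * d' * x)⁻¹ = d := by group
        rwa [heq]
      exact e1.reachable.trans e2.reachable
    have hmain : ∀ g x : G,
        (biCosetGraph G L R D).Reachable (Sum.inl (Quotient.mk (rightRel L) x))
          (Sum.inl (Quotient.mk (rightRel L) (g * x))) := by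
      intro g
      have hg : g ∈ Subgroup.closure S := by rw [← hHdef, htop]; trivial
      induction hg using Subgroup.closure_induction with
      | mem s hs => exact hstep s hs
      | one => intro x; rw [one_mul]
      | mul a b _ _ ha hb =>
        intro x
        have := (hb x).trans (ha (b * x))
        rwa [← mul_assoc] at this
      | inv a _ ha =>
        intro x
        have := ha (a⁻¹ * x)
        rw [← mul_assoc, mul_inv_cancel, one_mul] at this
        exact this.symm
    have hall : ∀ u, (biCosetGraph G L R D).Reachable u
        (Sum.inl (Quotient.mk (rightRel L) 1)) := by
      rintro (q | q)
      · induction q using Quotient.ind with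
        | _ a =>
          have := hmain a⁻¹ a
          rw [inv_mul_cancel] at this
          exact this
      · induction q using Quotient.ind with
        | _ b =>
          have e : (biCosetGraph G L R D).Adj (Sum.inr (Quotient.mk (rightRel R) b))
              (Sum.inl (Quotient.mk (rightRel L) (d₀⁻¹ * b))) := by
            refine ⟨d₀⁻¹ * b, b, ?_, Or.inr ⟨rfl, rfl⟩⟩
            have heq : b * (d₀⁻¹ * b)⁻¹ = d₀ := by group
            rwa [heq]
          refine e.reachable.trans ?_
          have := hmain (b⁻¹ * d₀) (d₀⁻¹ * b)
          have heq : b⁻¹ * d₀ * (d₀⁻¹ * b) = 1 := by group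
          rw [heq] at this
          exact this
    haveI : Nonempty (Quotient (rightRel L) ⊕ Quotient (rightRel R)) :=
      ⟨Sum.inl (Quotient.mk (rightRel L) 1)⟩
    exact ⟨fun u v => (hall u).trans (hall v).symm⟩
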